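/- Let B be a simple bipartite graph with bipartition V(B) = W ⊎ U, let G be its half-square, and let k be a positive integer such that G has k pairwise vertex-disjoint cycles. Let 𝒞 ∈ 𝒮, and let C ∈ 𝒞 be a cycle that is not a triangle with all three vertices in a single special clique of G. Let v ∈ V(C) and let x and y be the two neighbors of v on C. Then there is no special vertex s ∈ U with v, x, y ∈ N_B(s); that is, no special clique of G contains all of v, x, y. -/

import Mathlib

/-!
If `v, x, y` all lie in the special clique of `s₀`, then `x` and `y` are adjacent in the
half-square, and since `C` is induced, `xy` is an edge of `C`. A cycle containing the three
edges of the triangle `vxy` is that triangle, so `C` would be a triangle inside the special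
clique of `s₀`.
-/

open SimpleGraph

section Defs

variable {V : Type*} {ι : Type*}

/-- `W, U` is a bipartition of the simple graph `B`. -/
def IsBipartition (B : SimpleGraph V) (W U : Set V) : Prop :=
  (∀ v, v ∈ W ∨ v ∈ U) ∧ (∀ v, ¬(v ∈ W ∧ v ∈ U)) ∧
    ∀ ⦃a b⦄, B.Adj a b → (a ∈ W ∧ b ∈ U) ∨ (a ∈ U ∧ b ∈ W)

/-- The half-square of `B` on side `W`: two distinct vertices of `W` are adjacent
iff they have a common neighbor in `B`. -/
def halfSquare (B : SimpleGraph V) (W : Set V) : SimpleGraph V where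
  Adj a b := a ≠ b ∧ a ∈ W ∧ b ∈ W ∧ ∃ s, B.Adj a s ∧ B.Adj b s
  symm := ⟨by
    rintro a b ⟨hne, ha, hb, s, h1, h2⟩
    exact ⟨hne.symm, hb, ha, s, h2, h1⟩⟩
  loopless := ⟨by rintro a ⟨hne, _⟩; exact hne rfl⟩

/-- Tree decomposition of the graph `H` with vertex set `S`, over the tree `T`. -/
structure IsTreeDecompOn (H : SimpleGraph V) (S : Set V) (T : SimpleGraph ι)
    (β : ι → Set V) : Prop where
  covers : ∀ v ∈ S, ∃ t, v ∈ β t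
  edge_mem : ∀ ⦃u v⦄, H.Adj u v → ∃ t, u ∈ β t ∧ v ∈ β t
  conn : ∀ v ∈ S, (T.induce {t | v ∈ β t}).Connected

/-- `t'` is a descendant of `t` (inclusively) in the tree `T` rooted at `r`:
`t` lies on every path from `t'` to the root. -/
def Desc (T : SimpleGraph ι) (r : ι) (t t' : ι) : Prop :=
  ∀ p : T.Walk t' r, p.IsPath → t ∈ p.support

/-- `γ(t)`: union of the bags of `t` and of all its descendants. -/
def gammaSet (T : SimpleGraph ι) (r : ι) (β : ι → Set V) (t : ι) : Set V :=
  ⋃ t' ∈ {t' | Desc T r t t'}, β t'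

/-- The bag of the derived decomposition. -/
def derivedBag (B : SimpleGraph V) (W U : Set V) (T : SimpleGraph ι) (r : ι)
    (β : ι → Set V) (t : ι) : Set V :=
  (β t ∩ W) ∪ ⋃ s ∈ β t ∩ U, B.neighborSet s ∩ gammaSet T r β t

def originalSet (B : SimpleGraph V) (W U : Set V) (T : SimpleGraph ι) (r : ι)
    (β : ι → Set V) (t : ι) : Set V :=
  β t ∩ derivedBag B W U T r β t

def fakeSet (B : SimpleGraph V) (W U : Set V) (T : SimpleGraph ι) (r : ι)
    (β : ι → Set V) (t : ι) : Set V :=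
  derivedBag B W U T r β t \ β t

def cliquesAt (B : SimpleGraph V) (U : Set V) (β : ι → Set V) (t : ι) : Set (Set V) :=
  {K | ∃ s ∈ β t ∩ U, K = B.neighborSet s}

def IsChild (T : SimpleGraph ι) (r : ι) (t t' : ι) : Prop :=
  T.Adj t t' ∧ Desc T r t t'

def IsLeafNode (T : SimpleGraph ι) (r : ι) (β : ι → Set V) (t : ι) : Prop :=
  (∀ t', ¬ IsChild T r t t') ∧ β t = ∅

def IsForgetNode (T : SimpleGraph ι) (r : ι) (β : ι → Set V) (w : V) (t : ι) : Prop :=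
  ∃ t', IsChild T r t t' ∧ (∀ t'', IsChild T r t t'' → t'' = t') ∧
    w ∈ β t' ∧ β t = β t' \ {w}

def IsIntroduceNode (T : SimpleGraph ι) (r : ι) (β : ι → Set V) (w : V) (t : ι) : Prop :=
  ∃ t', IsChild T r t t' ∧ (∀ t'', IsChild T r t t'' → t'' = t') ∧
    w ∈ β t ∧ β t \ {w} = β t'

def IsJoinNode (T : SimpleGraph ι) (r : ι) (β : ι → Set V) (t : ι) : Prop :=
  ∃ t₁ t₂, t₁ ≠ t₂ ∧ IsChild T r t t₁ ∧ IsChild T r t t₂ ∧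
    (∀ t'', IsChild T r t t'' → t'' = t₁ ∨ t'' = t₂) ∧ β t = β t₁ ∧ β t = β t₂

/-- A nice (rooted) tree decomposition. -/
def IsNice (T : SimpleGraph ι) (r : ι) (β : ι → Set V) : Prop :=
  β r = ∅ ∧ ∀ t, IsLeafNode T r β t ∨ (∃ w, IsForgetNode T r β w t) ∨
    (∃ w, IsIntroduceNode T r β w t) ∨ IsJoinNode T r β t

/-- `E(X)`: edges of `G` with both endpoints in `X`. -/
def edgesIn (G : SimpleGraph V) (X : Set V) : Set (Sym2 V) :=
  {e | e ∈ G.edgeSet ∧ ∀ x ∈ e, x ∈ X}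

end Defs

section Packing

variable {V : Type*}

/-- A family of `k` pairwise vertex-disjoint cycles in `G`. -/
def IsCyclePacking (G : SimpleGraph V) (k : ℕ) (w : Fin k → V)
    (c : ∀ i, G.Walk (w i) (w i)) : Prop :=
  (∀ i, (c i).IsCycle) ∧
    ∀ i j, i ≠ j → ∀ x, x ∈ (c i).support → x ∉ (c j).support

/-- Every cycle of the family is an induced cycle of `G`. -/
def IsInducedFamily (G : SimpleGraph V) {k : ℕ} {w : Fin k → V}
    (c : ∀ i, G.Walk (w i) (w i)) : Prop :=
  ∀ i, ∀ x ∈ (c i).support, ∀ y ∈ (c i).support, G.Adj x y → s(x, y) ∈ (c i).edges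

/-- A cycle is a triangle with all its vertices in a single special clique. -/
def IsSpecialTriangle (B : SimpleGraph V) (U : Set V) {G : SimpleGraph V} {w : V}
    (c : G.Walk w w) : Prop :=
  c.length = 3 ∧ ∃ s₀ ∈ U, ∀ x ∈ c.support, x ∈ B.neighborSet s₀

/-- The number of cycles of the family that are triangles inside special cliques. -/
noncomputable def triCount (B : SimpleGraph V) (U : Set V) {G : SimpleGraph V}
    {k : ℕ} {w : Fin k → V} (c : ∀ i, G.Walk (w i) (w i)) : ℕ :=
  {i | IsSpecialTriangle B U (c i)}.ncard

/-- Membership in `𝒮`: a `k`-solution consisting of induced cycles of the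
half-square that maximizes the number of triangles from special cliques among
all such `k`-solutions. -/
def InOptS (B : SimpleGraph V) (W U : Set V) (k : ℕ) (w : Fin k → V)
    (c : ∀ i, (halfSquare B W).Walk (w i) (w i)) : Prop :=
  IsCyclePacking (halfSquare B W) k w c ∧ IsInducedFamily (halfSquare B W) c ∧
    ∀ (w' : Fin k → V) (c' : ∀ i, (halfSquare B W).Walk (w' i) (w' i)),
      IsCyclePacking (halfSquare B W) k w' c' → IsInducedFamily (halfSquare B W) c' →
        triCount B U c' ≤ triCount B U c

end Packing

namespace SimpleGraph.Walk

variable {V : Type*} {G : SimpleGraph V}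

lemma IsPath.length_eq_two_of_mem_edges {u w v : V} {p : G.Walk u v} (hp : p.IsPath)
    (huw : s(u, w) ∈ p.edges) (hwv : s(w, v) ∈ p.edges) :
    p.length = 2 ∧ ∀ z ∈ p.support, z = u ∨ z = w ∨ z = v := by
  cases p with
  | nil => simp at huw
  | cons h q =>
    obtain rfl : w = _ := by simpa using hp.eq_snd_of_mem_edges huw
    have hq : q.IsPath := hp.of_cons
    have hwv' : s(w, v) ∈ q.edges := by
      rw [edges_cons, List.mem_cons] at hwv
      refine hwv.resolve_left fun he => ?_
      obtain rfl : v = u := by grind [h.ne]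
      exact ((cons_isPath_iff _ _).mp hp).2 q.end_mem_support
    rw [hq.eq_adj_toWalk_of_mem_edges hwv']
    simp

lemma IsCycle.length_eq_three_of_mem_edges_of_start {v x y : V} {c : G.Walk v v} (hc : c.IsCycle)
    (hxy : x ≠ y) (hx : s(v, x) ∈ c.edges) (hy : s(v, y) ∈ c.edges)
    (hxy' : s(x, y) ∈ c.edges) :
    c.length = 3 ∧ ∀ z ∈ c.support, z = v ∨ z = x ∨ z = y := by
  cases c with
  | nil => exact absurd hc not_isCycle_nil
  | @cons _ b _ h q =>
    obtain ⟨hq, -⟩ := (cons_isCycle_iff _ _).mp hc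
    have snd_or_penultimate :
        ∀ z, s(v, z) ∈ (cons h q).edges → z = b ∨ z = q.penultimate := by
      intro z hz
      rw [edges_cons, List.mem_cons] at hz
      refine hz.imp (fun he => ?_) hq.eq_penultimate_of_mem_edges
      grind [h.ne]
    wlog hxb : x = b generalizing x y
    · have hyb : y = b := by grind
      obtain ⟨hl, hs⟩ := this hxy.symm hy hx (Sym2.eq_swap ▸ hxy') hyb
      exact ⟨hl, fun z hz => by grind⟩
    subst hxb
    have hvy : v ≠ y := (edges_subset_edgeSet _ hy).ne
    have hxy'' : s(x, y) ∈ q.edges := by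
      rw [edges_cons, List.mem_cons] at hxy'
      exact hxy'.resolve_left (by grind)
    have hyv : s(y, v) ∈ q.edges := by
      rw [edges_cons, List.mem_cons, Sym2.eq_swap] at hy
      exact hy.resolve_left (by grind)
    obtain ⟨hl, hs⟩ := hq.length_eq_two_of_mem_edges hxy'' hyv
    refine ⟨by simp [hl], ?_⟩
    simp only [support_cons, List.mem_cons]
    grind

lemma IsCycle.length_eq_three_of_mem_edges {u v x y : V} {c : G.Walk u u} (hc : c.IsCycle)
    (hxy : x ≠ y) (hx : s(v, x) ∈ c.edges) (hy : s(v, y) ∈ c.edges)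
    (hxy' : s(x, y) ∈ c.edges) :
    c.length = 3 ∧ ∀ z ∈ c.support, z = v ∨ z = x ∨ z = y := by
  classical
  have hv := c.fst_mem_support_of_mem_edges hx
  have hrot := c.rotate_edges v hv
  obtain ⟨hl, hs⟩ := (hc.rotate hv).length_eq_three_of_mem_edges_of_start hxy
    (hrot.mem_iff.mpr hx) (hrot.mem_iff.mpr hy) (hrot.mem_iff.mpr hxy')
  exact ⟨by rwa [length_rotate] at hl,
    fun z hz => hs z ((mem_support_rotate_iff ..).mpr hz)⟩

end SimpleGraph.Walk

lemma isClique_halfSquare_neighborSet {V : Type*} (B : SimpleGraph V) (W : Set V) (s : V) :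
    (halfSquare B W).IsClique (B.neighborSet s ∩ W) :=
  fun _ ha _ hb hab => ⟨hab, ha.2, hb.2, s, ha.1.symm, hb.1.symm⟩

theorem stmt_16_general {V : Type*} (B : SimpleGraph V) (W U : Set V) (k : ℕ)
    (w : Fin k → V) (c : ∀ i, (halfSquare B W).Walk (w i) (w i))
    (hS : InOptS B W U k w c)
    (i : Fin k) (hi : ¬ IsSpecialTriangle B U (c i))
    (v x y : V) (hxy : x ≠ y)
    (hx : s(v, x) ∈ (c i).edges) (hy : s(v, y) ∈ (c i).edges) :
    ¬ ∃ s₀ ∈ U, v ∈ B.neighborSet s₀ ∧ x ∈ B.neighborSet s₀ ∧ y ∈ B.neighborSet s₀ := by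
  rintro ⟨s₀, hs₀, hvs, hxs, hys⟩
  obtain ⟨⟨hcyc, -⟩, hind, -⟩ := hS
  have hxW : x ∈ W := ((c i).edges_subset_edgeSet hx).2.2.1
  have hyW : y ∈ W := ((c i).edges_subset_edgeSet hy).2.2.1
  have hadj : (halfSquare B W).Adj x y :=
    isClique_halfSquare_neighborSet B W s₀ ⟨hxs, hxW⟩ ⟨hys, hyW⟩ hxy
  have hxy_mem := hind i x ((c i).snd_mem_support_of_mem_edges hx)
    y ((c i).snd_mem_support_of_mem_edges hy) hadj
  obtain ⟨hlen, hsupp⟩ := (hcyc i).length_eq_three_of_mem_edges hxy hx hy hxy_mem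
  exact hi ⟨hlen, s₀, hs₀,
    fun z hz => by obtain rfl | rfl | rfl := hsupp z hz <;> assumption⟩

/-- for an optimal solution `𝒞 ∈ 𝒮`, a cycle `C ∈ 𝒞` that is not
a triangle inside a special clique, a vertex `v` of `C` and its two neighbors
`x, y` on `C`, no special clique contains all of `v, x, y`. -/
theorem stmt_16 {V : Type*} [Fintype V] (B : SimpleGraph V) (W U : Set V)
    (hbip : IsBipartition B W U) (k : ℕ) (hk : 0 < k)
    (w : Fin k → V) (c : ∀ i, (halfSquare B W).Walk (w i) (w i))
    (hS : InOptS B W U k w c)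
    (i : Fin k) (hi : ¬ IsSpecialTriangle B U (c i))
    (v x y : V) (hv : v ∈ (c i).support) (hxy : x ≠ y)
    (hx : s(v, x) ∈ (c i).edges) (hy : s(v, y) ∈ (c i).edges) :
    ¬ ∃ s₀ ∈ U, v ∈ B.neighborSet s₀ ∧ x ∈ B.neighborSet s₀ ∧ y ∈ B.neighborSet s₀ :=
  stmt_16_general B W U k w c hS i hi v x y hxy hx hy
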